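/- arXiv:1404.0155 — 7 statements merged into one kernel-verified Lean document; each statement's English description precedes it below -/
import Mathlib

section
/- For all x>0, (1/2) e^{−x} ln(1 + 2/x) < E_1(x) < e^{−x} ln(1 + 1/x), where E_1(x) = ∫_1^∞ e^{−xt}/t dt is the exponential integral. -/
/-!
Write `E₁(x) = ∫_x^∞ e^{-u}/u du`, so that `E₁' = -e^{-x}/x` and `E₁ → 0` at infinity, as do
both bounds. Hence each of `e^{-x} log(1 + 1/x) - E₁(x)` and `E₁(x) - ½ e^{-x} log(1 + 2/x)`
is positive as soon as its derivative is negative. The derivatives are `e^{-x}` times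
`1/(x+1) - log(1 + 1/x)` and `½ (log(1 + 2/x) - 1/x - 1/(x+2))` respectively; the first is
negative by `log r > 1 - 1/r`, the second by `log r < sinh (log r) = (r - 1/r)/2`
at `r = 1 + 2/x`.
-/

open Real Filter Topology MeasureTheory Set

lemma lt_of_hasDerivAt_neg_of_tendsto {g g' : ℝ → ℝ} {a l : ℝ}
    (hg : ∀ y ∈ Ici a, HasDerivAt g (g' y) y) (hg' : ∀ y ∈ Ici a, g' y < 0)
    (hlim : Tendsto g atTop (𝓝 l)) : l < g a := by
  have hanti : StrictAntiOn g (Ici a) :=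
    strictAntiOn_of_deriv_neg (convex_Ici a)
      (fun y hy => (hg y hy).continuousAt.continuousWithinAt)
      fun y hy => by
        rw [interior_Ici] at hy
        exact (hg y (Ioi_subset_Ici_self hy)).deriv ▸ hg' y (Ioi_subset_Ici_self hy)
  have hle : l ≤ g (a + 1) :=
    le_of_tendsto hlim <| (eventually_ge_atTop (a + 1)).mono fun y hy =>
      hanti.antitoneOn (by simp) (mem_Ici.2 (by linarith)) hy
  exact hle.trans_lt (hanti (by simp) (by simp) (by linarith))

lemma one_sub_inv_lt_log {r : ℝ} (hr : 0 < r) (hr1 : r ≠ 1) : 1 - r⁻¹ < log r := by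
  have := log_lt_sub_one_of_pos (inv_pos.2 hr) (inv_ne_one.2 hr1)
  rw [log_inv] at this
  linarith

lemma log_lt_half_sub_inv {r : ℝ} (hr : 1 < r) : log r < (r - r⁻¹) / 2 := by
  rw [← sinh_log (by linarith)]
  exact self_lt_sinh_iff.2 (log_pos hr)

lemma one_div_add_one_lt_log_one_add_one_div {x : ℝ} (hx : 0 < x) :
    1 / (x + 1) < log (1 + 1 / x) := by
  have h := one_sub_inv_lt_log (r := 1 + 1 / x) (by positivity) (by simp [hx.ne'])
  convert h using 1
  field_simp
  ring

lemma log_one_add_two_div_lt {x : ℝ} (hx : 0 < x) :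
    log (1 + 2 / x) < 1 / x + 1 / (x + 2) := by
  have h := log_lt_half_sub_inv (r := 1 + 2 / x) (lt_add_of_pos_right 1 (by positivity))
  convert h using 1
  field_simp
  ring

noncomputable def expIntegralE1 (x : ℝ) : ℝ := ∫ u in Ioi x, exp (-u) / u

lemma integrableOn_exp_neg_div_Ioi {x : ℝ} (hx : 0 < x) :
    IntegrableOn (fun u => exp (-u) / u) (Ioi x) := by
  refine ((exp_neg_integrableOn_Ioi x one_pos).const_mul x⁻¹).mono'
    (Measurable.aestronglyMeasurable (by fun_prop)) ?_
  filter_upwards [ae_restrict_mem measurableSet_Ioi] with u (hu : x < u)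
  rw [norm_of_nonneg (by have := hx.trans hu; positivity), neg_one_mul, div_eq_inv_mul]
  gcongr

lemma integral_exp_neg_mul_div_Ioi_one {x : ℝ} (hx : 0 < x) :
    ∫ t in Ioi (1 : ℝ), exp (-(x * t)) / t = expIntegralE1 x := by
  calc ∫ t in Ioi (1 : ℝ), exp (-(x * t)) / t
      = ∫ t in Ioi (1 : ℝ), x * (exp (-(x * t)) / (x * t)) :=
        setIntegral_congr_fun measurableSet_Ioi fun t (ht : 1 < t) => by field_simp
    _ = expIntegralE1 x := by
        rw [integral_const_mul, integral_comp_mul_left_Ioi (fun u => exp (-u) / u) 1 hx,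
          mul_one, smul_eq_mul, expIntegralE1, mul_inv_cancel_left₀ hx.ne']

lemma hasDerivAt_expIntegralE1 {x : ℝ} (hx : 0 < x) :
    HasDerivAt expIntegralE1 (-(exp (-x) / x)) x := by
  have hsplit : ∀ y > 0, expIntegralE1 y = expIntegralE1 1 - ∫ u in (1 : ℝ)..y, exp (-u) / u :=
    fun y hy => by
      rw [expIntegralE1, expIntegralE1, ← intervalIntegral.integral_Ioi_sub_Ioi'
        (integrableOn_exp_neg_div_Ioi one_pos) (integrableOn_exp_neg_div_Ioi hy)]
      ring
  have hcont : ContinuousOn (fun u => exp (-u) / u) (Ioi 0) :=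
    by fun_prop (disch := exact fun u (hu : 0 < u) => hu.ne')
  have hint : IntervalIntegrable (fun u => exp (-u) / u) volume 1 x :=
    (hcont.mono fun u hu => lt_of_lt_of_le (lt_min one_pos hx) hu.1).intervalIntegrable
  have hderiv := (intervalIntegral.integral_hasDerivAt_right hint
    (hcont.stronglyMeasurableAtFilter isOpen_Ioi x hx) (hcont.continuousAt (Ioi_mem_nhds hx)))
  simpa using (hderiv.const_sub (expIntegralE1 1)).congr_of_eventuallyEq
    (eventually_gt_nhds hx |>.mono hsplit)

lemma tendsto_expIntegralE1_atTop : Tendsto expIntegralE1 atTop (𝓝 0) := by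
  refine tendsto_of_tendsto_of_tendsto_of_le_of_le' tendsto_const_nhds
    tendsto_exp_neg_atTop_nhds_zero ?_ ?_
  · filter_upwards [eventually_gt_atTop 0] with x hx
    exact setIntegral_nonneg measurableSet_Ioi fun u (hu : x < u) => by
      have := hx.trans hu; positivity
  · filter_upwards [eventually_ge_atTop 1] with x hx
    calc expIntegralE1 x ≤ ∫ u in Ioi x, exp (-u) := by
          refine setIntegral_mono_on (integrableOn_exp_neg_div_Ioi (by linarith))
            ?_ measurableSet_Ioi fun u (hu : x < u) => ?_
          · simpa using exp_neg_integrableOn_Ioi x one_pos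
          · exact div_le_self (exp_pos _).le (by linarith)
      _ = exp (-x) := integral_exp_neg_Ioi x

lemma hasDerivAt_exp_neg_mul_log_one_add_div {c y : ℝ} (hy : y ≠ 0) (hyc : y + c ≠ 0) :
    HasDerivAt (fun x => exp (-x) * log (1 + c / x))
      (-exp (-y) * (log (1 + c / y) + c / (y * (y + c)))) y := by
  have hne : 1 + c / y ≠ 0 := by
    rw [one_add_div hy]
    exact div_ne_zero hyc hy
  have hlog : HasDerivAt (fun x => log (1 + c / x)) (c * -(y ^ 2)⁻¹ / (1 + c / y)) y := by
    simpa only [div_eq_mul_inv] using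
      (((hasDerivAt_inv hy).const_mul c).const_add 1).log (by rwa [← div_eq_mul_inv])
  refine ((hasDerivAt_neg y).exp.mul hlog).congr_deriv ?_
  field_simp
  ring

lemma tendsto_exp_neg_mul_log_one_add_div (c : ℝ) :
    Tendsto (fun x => exp (-x) * log (1 + c / x)) atTop (𝓝 0) := by
  have h : Tendsto (fun x => log (1 + c / x)) atTop (𝓝 0) := by
    simpa using ((tendsto_const_nhds.div_atTop tendsto_id).const_add 1).log (by simp)
  simpa using tendsto_exp_neg_atTop_nhds_zero.mul h

lemma expIntegralE1_lt_exp_neg_mul_log {x : ℝ} (hx : 0 < x) :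
    expIntegralE1 x < exp (-x) * log (1 + 1 / x) := by
  have key := lt_of_hasDerivAt_neg_of_tendsto
    (g := fun y => exp (-y) * log (1 + 1 / y) - expIntegralE1 y)
    (g' := fun y => exp (-y) * (1 / (y + 1) - log (1 + 1 / y))) (a := x)
    (fun y (hy : x ≤ y) => by
      have hy0 : 0 < y := hx.trans_le hy
      refine ((hasDerivAt_exp_neg_mul_log_one_add_div hy0.ne' (by positivity)).sub
        (hasDerivAt_expIntegralE1 hy0)).congr_deriv ?_
      field_simp
      ring)
    (fun y (hy : x ≤ y) => mul_neg_of_pos_of_neg (exp_pos _)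
      (sub_neg.2 (one_div_add_one_lt_log_one_add_one_div (hx.trans_le hy))))
    (by simpa only [sub_zero] using
      (tendsto_exp_neg_mul_log_one_add_div 1).sub tendsto_expIntegralE1_atTop)
  linarith

lemma half_exp_neg_mul_log_lt_expIntegralE1 {x : ℝ} (hx : 0 < x) :
    1 / 2 * (exp (-x) * log (1 + 2 / x)) < expIntegralE1 x := by
  have key := lt_of_hasDerivAt_neg_of_tendsto
    (g := fun y => expIntegralE1 y - 1 / 2 * (exp (-y) * log (1 + 2 / y)))
    (g' := fun y => exp (-y) / 2 * (log (1 + 2 / y) - (1 / y + 1 / (y + 2)))) (a := x)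
    (fun y (hy : x ≤ y) => by
      have hy0 : 0 < y := hx.trans_le hy
      refine ((hasDerivAt_expIntegralE1 hy0).sub
        ((hasDerivAt_exp_neg_mul_log_one_add_div hy0.ne' (by positivity)).const_mul
          (1 / 2))).congr_deriv ?_
      field_simp
      ring)
    (fun y (hy : x ≤ y) => mul_neg_of_pos_of_neg (by positivity)
      (sub_neg.2 (log_one_add_two_div_lt (hx.trans_le hy))))
    (by simpa only [mul_zero, sub_zero] using
      tendsto_expIntegralE1_atTop.sub ((tendsto_exp_neg_mul_log_one_add_div 2).const_mul (1 / 2)))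
  linarith

theorem stmt_7 :
    ∀ x > (0 : ℝ),
      (1 / 2) * Real.exp (-x) * Real.log (1 + 2 / x) <
        (∫ t in Set.Ioi (1 : ℝ), Real.exp (-(x * t)) / t) ∧
      (∫ t in Set.Ioi (1 : ℝ), Real.exp (-(x * t)) / t) <
        Real.exp (-x) * Real.log (1 + 1 / x) := by
  intro x hx
  rw [integral_exp_neg_mul_div_Ioi_one hx, mul_assoc]
  exact ⟨half_exp_neg_mul_log_lt_expIntegralE1 hx, expIntegralE1_lt_exp_neg_mul_log hx⟩
end

section
/- Let α>1 and β>0, and for a<b define m^{a,b}_f = (1/(b−a)) ∫_a^b f(x) dx. Then |∫_a^b (R_{α,β}(x) − sin(π x)) dx| ≤ (2/π)(ζ(α+β) − 1), and consequently m^{a,b}_{R_{α,β}} → m^{a,b}_{sin(π·)} as β → ∞. -/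
open Real Filter Topology intervalIntegral

noncomputable def R (α β x : ℝ) : ℝ :=
  ∑' n : ℕ, Real.sin (Real.pi * ((n : ℝ) + 1) ^ β * x) / ((n : ℝ) + 1) ^ α

/-!
Integrate termwise, by dominated convergence with the bound `n ^ (-α)`. Since
`|∫ sin (c x) dx| ≤ 2 / c` on any interval, the `n`-th term contributes at most
`2 / (π n ^ (α + β))`, and the term `n = 1` is exactly `∫ sin (π x) dx`. Summing over `n ≥ 2`
gives `(2 / π) (ζ(α + β) - 1)`, which tends to `0` as `β → ∞` because `ζ(s) → 1` as `s → ∞`.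
-/

lemma summable_one_div_nat_add_one_rpow {s : ℝ} (hs : 1 < s) :
    Summable fun n : ℕ => 1 / ((n : ℝ) + 1) ^ s := by
  simpa using (summable_nat_add_iff 1).mpr (Real.summable_one_div_nat_rpow.mpr hs)

lemma riemannZeta_ofReal_eq_tsum {s : ℝ} (hs : 1 < s) :
    riemannZeta s = ((∑' n : ℕ, 1 / ((n : ℝ) + 1) ^ s : ℝ) : ℂ) := by
  rw [zeta_eq_tsum_one_div_nat_add_one_cpow (by simpa using hs), Complex.ofReal_tsum]
  congr 1 with n
  push_cast [Complex.ofReal_cpow (by positivity : (0 : ℝ) ≤ n + 1)]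
  rfl

lemma hasSum_riemannZeta_re {s : ℝ} (hs : 1 < s) :
    HasSum (fun n : ℕ => 1 / ((n : ℝ) + 1) ^ s) (riemannZeta s).re := by
  rw [riemannZeta_ofReal_eq_tsum hs, Complex.ofReal_re]
  exact (summable_one_div_nat_add_one_rpow hs).hasSum

lemma tendsto_riemannZeta_atTop : Tendsto (fun s : ℝ => riemannZeta s) atTop (𝓝 1) := by
  have hL := LSeries.tendsto_atTop (f := 1)
    (by rw [LSeries.abscissaOfAbsConv_one]; exact EReal.coe_lt_top 1)
  refine hL.congr' ?_
  filter_upwards [eventually_gt_atTop 1] with s hs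
  exact LSeries_one_eq_riemannZeta (by simpa using hs)

lemma abs_integral_sin_mul_le {c : ℝ} (hc : 0 < c) (a b : ℝ) :
    |∫ x in a..b, sin (c * x)| ≤ 2 / c := by
  rw [integral_comp_mul_left (fun x => sin x) hc.ne', integral_sin, smul_eq_mul, abs_mul,
    abs_of_pos (inv_pos.mpr hc), inv_mul_eq_div]
  gcongr
  calc |cos (c * a) - cos (c * b)| ≤ |cos (c * a)| + |cos (c * b)| := abs_sub _ _
    _ ≤ 1 + 1 := add_le_add (abs_cos_le_one _) (abs_cos_le_one _)
    _ = 2 := one_add_one_eq_two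

lemma abs_sin_div_rpow_le (α β x : ℝ) (n : ℕ) :
    |sin (π * ((n : ℝ) + 1) ^ β * x) / ((n : ℝ) + 1) ^ α| ≤ 1 / ((n : ℝ) + 1) ^ α := by
  rw [abs_div, abs_of_pos (by positivity : (0 : ℝ) < ((n : ℝ) + 1) ^ α)]
  gcongr
  exact abs_sin_le_one _

lemma continuous_R {α : ℝ} (hα : 1 < α) (β : ℝ) : Continuous (R α β) :=
  continuous_tsum (fun n => by fun_prop) (summable_one_div_nat_add_one_rpow hα)
    fun n x => abs_sin_div_rpow_le α β x n

lemma integral_R_sub_sin {α : ℝ} (hα : 1 < α) (β a b : ℝ) :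
    ∫ x in a..b, (R α β x - sin (π * x)) = (∫ x in a..b, R α β x) - ∫ x in a..b, sin (π * x) :=
  integral_sub ((continuous_R hα β).intervalIntegrable a b)
    ((by fun_prop : Continuous fun x => sin (π * x)).intervalIntegrable a b)

lemma hasSum_integral_R {α : ℝ} (hα : 1 < α) (β a b : ℝ) :
    HasSum (fun n : ℕ => ∫ x in a..b, sin (π * ((n : ℝ) + 1) ^ β * x) / ((n : ℝ) + 1) ^ α)
      (∫ x in a..b, R α β x) := by
  have hu := summable_one_div_nat_add_one_rpow hα
  refine hasSum_integral_of_dominated_convergence (fun n _ => 1 / ((n : ℝ) + 1) ^ α)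
    (fun n => by fun_prop) (fun n => .of_forall fun x _ => abs_sin_div_rpow_le α β x n)
    (.of_forall fun _ _ => hu) intervalIntegrable_const (.of_forall fun x _ => ?_)
  exact (hu.of_norm_bounded fun n => abs_sin_div_rpow_le α β x n).hasSum

lemma abs_integral_sin_div_rpow_le (α β a b : ℝ) (n : ℕ) :
    |∫ x in a..b, sin (π * ((n : ℝ) + 1) ^ β * x) / ((n : ℝ) + 1) ^ α| ≤
      2 / π * (1 / ((n : ℝ) + 1) ^ (α + β)) := by
  have hn : (0 : ℝ) < (n : ℝ) + 1 := by positivity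
  rw [integral_div, abs_div, abs_of_pos (rpow_pos_of_pos hn α)]
  calc |∫ x in a..b, sin (π * ((n : ℝ) + 1) ^ β * x)| / ((n : ℝ) + 1) ^ α
      ≤ 2 / (π * ((n : ℝ) + 1) ^ β) / ((n : ℝ) + 1) ^ α := by
        gcongr
        exact abs_integral_sin_mul_le (by positivity) a b
    _ = 2 / π * (1 / ((n : ℝ) + 1) ^ (α + β)) := by
        rw [rpow_add hn]
        field_simp

lemma abs_integral_R_sub_sin_le {α β : ℝ} (hα : 1 < α) (hαβ : 1 < α + β) (a b : ℝ) :
    |∫ x in a..b, (R α β x - sin (π * x))| ≤ 2 / π * ((riemannZeta (α + β : ℝ)).re - 1) := by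
  set I := fun n : ℕ => ∫ x in a..b, sin (π * ((n : ℝ) + 1) ^ β * x) / ((n : ℝ) + 1) ^ α
  have hI : HasSum (fun n => I (n + 1)) (∫ x in a..b, (R α β x - sin (π * x))) := by
    rw [integral_R_sub_sin hα]
    refine (hasSum_nat_add_iff 1).mpr ?_
    simpa [I] using hasSum_integral_R hα β a b
  have hζ : HasSum (fun n : ℕ => 2 / π * (1 / (((n + 1 : ℕ) : ℝ) + 1) ^ (α + β)))
      (2 / π * ((riemannZeta (α + β : ℝ)).re - 1)) := by
    refine HasSum.mul_left _ ?_
    refine (hasSum_nat_add_iff (f := fun n : ℕ => 1 / ((n : ℝ) + 1) ^ (α + β)) 1).mpr ?_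
    simpa using hasSum_riemannZeta_re hαβ
  exact hI.norm_le_of_bounded hζ fun n => abs_integral_sin_div_rpow_le α β a b (n + 1)

lemma tendsto_integral_R_sub_sin {α : ℝ} (hα : 1 < α) (a b : ℝ) :
    Tendsto (fun β => ∫ x in a..b, (R α β x - sin (π * x))) atTop (𝓝 0) := by
  have hζ : Tendsto (fun β : ℝ => 2 / π * ((riemannZeta (α + β : ℝ)).re - 1)) atTop (𝓝 0) := by
    have := ((Complex.continuous_re.tendsto 1).comp tendsto_riemannZeta_atTop).comp
      (tendsto_atTop_add_const_left atTop α tendsto_id)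
    simpa using (this.sub_const 1).const_mul (2 / π)
  refine squeeze_zero_norm' ?_ hζ
  filter_upwards [eventually_gt_atTop 0] with β hβ
  exact abs_integral_R_sub_sin_le hα (by linarith) a b

theorem stmt_9_general (α : ℝ) (hα : 1 < α) (a b : ℝ) :
    (∀ β > (0 : ℝ),
      |∫ x in a..b, (R α β x - Real.sin (Real.pi * x))| ≤
        (2 / Real.pi) * ((riemannZeta (α + β)).re - 1)) ∧
    Tendsto (fun β : ℝ => (1 / (b - a)) * ∫ x in a..b, R α β x)
      atTop (𝓝 ((1 / (b - a)) * ∫ x in a..b, Real.sin (Real.pi * x))) := by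
  refine ⟨fun β hβ => by exact_mod_cast abs_integral_R_sub_sin_le hα (by linarith) a b, ?_⟩
  have h := ((tendsto_integral_R_sub_sin hα a b).const_mul (1 / (b - a))).add_const
    ((1 / (b - a)) * ∫ x in a..b, sin (π * x))
  rw [mul_zero, zero_add] at h
  refine h.congr fun β => ?_
  rw [integral_R_sub_sin hα]
  ring

theorem stmt_9 (α : ℝ) (hα : 1 < α) (a b : ℝ) (hab : a < b) :
    (∀ β > (0 : ℝ),
      |∫ x in a..b, (R α β x - Real.sin (Real.pi * x))| ≤
        (2 / Real.pi) * ((riemannZeta (α + β)).re - 1)) ∧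
    Tendsto (fun β : ℝ => (1 / (b - a)) * ∫ x in a..b, R α β x)
      atTop (𝓝 ((1 / (b - a)) * ∫ x in a..b, Real.sin (Real.pi * x))) :=
  stmt_9_general α hα a b
end

section
/- The Fourier transform of the Lusin wavelet ψ(x) = 1/(π (x+i)²) is given by ψ̂(ξ) = −2ξ e^{−ξ} for ξ ≥ 0 and ψ̂(ξ) = 0 for ξ < 0, where ψ̂(ξ) = ∫_ℝ e^{−ixξ} ψ(x) dx. -/
/-
The claimed transform h(ξ) = -2 ξ₊ e^{-ξ₊} is continuous and integrable, and its inverse transform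
is an elementary Laplace integral: ∫₀^∞ e^{ixξ} (-2ξ e^{-ξ}) dξ = -2 / (1 - ix)² = 2 / (x + i)²,
which is 2π ψ(x). Since ψ is integrable, Fourier inversion gives ψ̂ = h.
-/

open Real Complex MeasureTheory

noncomputable def lusin (x : ℝ) : ℂ := 1 / (Real.pi * ((x : ℂ) + Complex.I) ^ 2)

open Filter Set
open scoped FourierTransform Topology

theorem integral_cexp_neg_mul_eq_of_integral_cexp_mul {h ψ : ℝ → ℂ} (hh : Continuous h)
    (hh_int : Integrable h) (hψ : Integrable ψ)
    (hinv : ∀ x : ℝ, ∫ ξ : ℝ, exp (I * x * ξ) * h ξ = 2 * π * ψ x) (ξ : ℝ) :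
    ∫ x : ℝ, exp (-I * x * ξ) * ψ x = h ξ := by
  -- Mathlib's `𝓕` uses the kernel `e^{-2πixw}`; `H` is `h` in that normalization.
  set H : ℝ → ℂ := fun w => h (2 * π * w)
  have hH_inv : 𝓕⁻ H = ψ := by
    ext x
    rw [Real.fourierInv_eq']
    calc ∫ w : ℝ, exp (↑(2 * π * inner ℝ w x) * I) • H w
        = ∫ w : ℝ, (fun ξ : ℝ => exp (I * x * ξ) * h ξ) (2 * π * w) := by
          congr 1; ext w; simp only [Real.inner_apply, smul_eq_mul, H]; push_cast; ring_nf
      _ = ψ x := by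
          rw [Measure.integral_comp_mul_left (fun ξ : ℝ => exp (I * x * ξ) * h ξ), hinv,
            abs_of_pos (by positivity), real_smul]
          push_cast; field_simp
  have hH_fourier : 𝓕 H = fun x => ψ (-x) := by
    ext x
    rw [← hH_inv, Real.fourierInv_eq_fourier_neg, neg_neg]
  have hψ_fourier : 𝓕 ψ = H := by
    rw [← hH_inv]
    refine Continuous.fourier_fourierInv_eq (by fun_prop) (hh_int.comp_mul_left' ?_) ?_
    · positivity
    · rw [hH_fourier]; exact hψ.comp_neg
  calc ∫ x : ℝ, exp (-I * x * ξ) * ψ x = 𝓕 ψ (ξ / (2 * π)) := by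
        rw [Real.fourier_real_eq_integral_exp_smul]
        congr 1; ext x
        rw [smul_eq_mul]; push_cast; field_simp
    _ = h ξ := by rw [hψ_fourier]; simp only [H]; congr 1; field_simp

section LaplaceTransform

variable {c : ℂ}

theorem tendsto_cexp_neg_mul_atTop (hc : 0 < c.re) :
    Tendsto (fun t : ℝ => exp (-(c * t))) atTop (𝓝 0) := by
  rw [Complex.tendsto_exp_nhds_zero_iff]
  simpa [Complex.mul_re] using tendsto_id.const_mul_atTop hc

theorem tendsto_ofReal_mul_cexp_neg_mul_atTop (hc : 0 < c.re) :
    Tendsto (fun t : ℝ => (t : ℂ) * exp (-(c * t))) atTop (𝓝 0) := by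
  rw [tendsto_zero_iff_norm_tendsto_zero]
  have hdecay := (isLittleO_pow_exp_pos_mul_atTop 1 hc).tendsto_div_nhds_zero
  refine hdecay.congr' ?_
  filter_upwards [eventually_ge_atTop 0] with t ht
  rw [norm_mul, Complex.norm_exp, Complex.norm_real, Real.norm_of_nonneg ht, pow_one,
    div_eq_mul_inv, ← Real.exp_neg]
  simp [Complex.mul_re]

theorem integrableOn_ofReal_mul_cexp_neg_mul_Ioi (hc : 0 < c.re) :
    IntegrableOn (fun t : ℝ => (t : ℂ) * exp (-(c * t))) (Ioi 0) := by
  refine Integrable.mono'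
    (integrableOn_rpow_mul_exp_neg_mul_rpow (s := 1) (by norm_num) one_pos hc) (by fun_prop)
    ((ae_restrict_iff' measurableSet_Ioi).mpr (ae_of_all _ fun t ht => ?_))
  rw [norm_mul, Complex.norm_exp, Complex.norm_real, Real.norm_of_nonneg (le_of_lt ht),
    Real.rpow_one]
  simp [Complex.mul_re]

theorem integral_ofReal_mul_cexp_neg_mul_Ioi (hc : 0 < c.re) :
    ∫ t in Ioi (0 : ℝ), (t : ℂ) * exp (-(c * t)) = 1 / c ^ 2 := by
  have hc0 : c ≠ 0 := fun h => by simp [h] at hc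
  set F : ℝ → ℂ := fun t => -((t / c + 1 / c ^ 2) * exp (-(c * t)))
  have hF_deriv (t : ℝ) : HasDerivAt F ((t : ℂ) * exp (-(c * t))) t := by
    have hid : HasDerivAt (fun s : ℝ => (s : ℂ)) 1 t := by
      simpa using (hasDerivAt_id t).ofReal_comp
    have hexp := (hid.const_mul c).fun_neg.cexp
    refine (((hid.div_const c).add_const (1 / c ^ 2)).fun_mul hexp).fun_neg.congr_deriv ?_
    field_simp
    ring
  have hF_lim : Tendsto F atTop (𝓝 0) := by
    have := ((tendsto_ofReal_mul_cexp_neg_mul_atTop hc).div_const c).add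
      ((tendsto_cexp_neg_mul_atTop hc).const_mul (1 / c ^ 2))
    simpa [F, add_mul, div_mul_eq_mul_div] using this.neg
  rw [integral_Ioi_of_hasDerivAt_of_tendsto (by fun_prop) (fun t _ => hF_deriv t)
    (integrableOn_ofReal_mul_cexp_neg_mul_Ioi hc) hF_lim]
  simp [F]

end LaplaceTransform

theorem ofReal_add_I_ne_zero (x : ℝ) : (x : ℂ) + I ≠ 0 := fun h => by
  simpa using congrArg Complex.im h

theorem norm_lusin (x : ℝ) : ‖lusin x‖ = π⁻¹ * (1 + x ^ 2)⁻¹ := by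
  have hnorm_sq : ‖(x : ℂ) + I‖ ^ 2 = 1 + x ^ 2 := by
    rw [Complex.sq_norm, Complex.normSq_apply]
    simp only [add_re, ofReal_re, I_re, add_zero, add_im, ofReal_im, I_im, zero_add, mul_one]
    ring
  rw [lusin, norm_div, norm_one, norm_mul, norm_pow, Complex.norm_real,
    Real.norm_of_nonneg Real.pi_pos.le, hnorm_sq, one_div, mul_inv]

theorem continuous_lusin : Continuous lusin :=
  continuous_const.div (by fun_prop) fun x =>
    mul_ne_zero (by exact_mod_cast Real.pi_ne_zero) (pow_ne_zero 2 (ofReal_add_I_ne_zero x))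

theorem integrable_lusin : Integrable lusin :=
  (integrable_inv_one_add_sq.const_mul π⁻¹).mono' continuous_lusin.aestronglyMeasurable
    (ae_of_all _ fun x => (norm_lusin x).le)

-- Written with `max ξ 0` rather than an `if`, so that continuity is immediate.
noncomputable def lusinHat (ξ : ℝ) : ℂ := -2 * (max ξ 0 : ℝ) * Complex.exp (-(max ξ 0 : ℝ))

theorem continuous_lusinHat : Continuous lusinHat := by
  unfold lusinHat; fun_prop

theorem lusinHat_eq_ite (ξ : ℝ) :
    lusinHat ξ = if 0 ≤ ξ then -2 * ξ * Complex.exp (-ξ) else 0 := by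
  unfold lusinHat
  split_ifs with hξ
  · rw [max_eq_left hξ]
  · simp [max_eq_right (not_le.mp hξ).le]

theorem cexp_mul_lusinHat_eq_indicator (x : ℝ) :
    (fun ξ : ℝ => exp (I * x * ξ) * lusinHat ξ) =
      (Ioi 0).indicator fun ξ : ℝ => -2 * ((ξ : ℂ) * exp (-((1 - I * x) * ξ))) := by
  ext ξ
  rcases le_or_gt ξ 0 with hξ | hξ
  · simp [lusinHat, max_eq_right hξ, not_lt.mpr hξ]
  · rw [indicator_of_mem (mem_Ioi.mpr hξ), lusinHat, max_eq_left hξ.le, mul_left_comm,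
      ← mul_assoc (-2 : ℂ), mul_assoc, ← Complex.exp_add]
    ring_nf

theorem integrable_lusinHat : Integrable lusinHat := by
  have h : lusinHat =
      (Ioi 0).indicator fun ξ : ℝ => -2 * ((ξ : ℂ) * Complex.exp (-(1 * ξ))) := by
    simpa using cexp_mul_lusinHat_eq_indicator 0
  rw [h, integrable_indicator_iff measurableSet_Ioi]
  exact (integrableOn_ofReal_mul_cexp_neg_mul_Ioi (by simp)).const_mul _

theorem integral_cexp_mul_lusinHat (x : ℝ) :
    ∫ ξ : ℝ, exp (I * x * ξ) * lusinHat ξ = 2 * π * lusin x := by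
  have hre : 0 < (1 - I * x).re := by simp
  have hsq : (1 - I * x) ^ 2 = -((x : ℂ) + I) ^ 2 := by
    linear_combination (1 + (x : ℂ) ^ 2) * I_sq
  rw [cexp_mul_lusinHat_eq_indicator, integral_indicator measurableSet_Ioi, integral_const_mul,
    integral_ofReal_mul_cexp_neg_mul_Ioi hre, hsq, lusin]
  have := ofReal_add_I_ne_zero x
  field_simp

theorem stmt_13 :
    ∀ ξ : ℝ, (∫ x : ℝ, Complex.exp (-Complex.I * x * ξ) * lusin x) =
      if 0 ≤ ξ then -2 * ξ * Complex.exp (-ξ) else 0 := by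
  intro ξ
  rw [integral_cexp_neg_mul_eq_of_integral_cexp_mul continuous_lusinHat integrable_lusinHat
    integrable_lusin integral_cexp_mul_lusinHat, lusinHat_eq_ite]
end

section
/- Let α>1, β>0, and let ψ(x) = 1/(π(x+i)²) be the Lusin wavelet. Then the continuous wavelet transform W_ψ R_{α,β}(a,b) = ∫_ℝ R_{α,β}(x) (1/a) conj(ψ)((x−b)/a) dx satisfies W_ψ R_{α,β}(a,b) = i a π ∑_{n=1}^∞ e^{iπ n^β (b+ia)} n^{β−α} for all a>0, b ∈ ℝ. -/
open Real Complex MeasureTheory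

/-!
With `z = b + i a`, the wavelet kernel `(1/a) conj ψ((x - b)/a)` equals `(a/π) (x - z)⁻²`. Since
`α > 1`, the series is dominated by `∑ n^(-α) |x - z|⁻²`, so sum and integral can be exchanged and
everything reduces to `∫ sin (c x) (x - z)⁻² dx = i π c e^(i c z)` for `c > 0`. That integral comes
from Fourier inversion: `t ↦ t₊ e^(i t z)` has Fourier transform `-(2πξ - z)⁻²` (a Laplace transform
`∫₀^∞ t e^(-s t) dt = s⁻²`), hence `∫ e^(i x t) (x - z)⁻² dx = -2π t₊ e^(i t z)`, which vanishes
for `t ≤ 0`.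
-/

open Set Filter FourierTransform
open scoped Topology

lemma integrableOn_mul_cexp_neg_mul_Ioi {s : ℂ} (hs : 0 < s.re) :
    IntegrableOn (fun t : ℝ => (t : ℂ) * cexp (-(s * t))) (Ioi 0) := by
  have h := integrableOn_rpow_mul_exp_neg_mul_rpow (p := 1) (s := 1) (b := s.re)
    (by norm_num) zero_lt_one hs
  refine (integrable_norm_iff (by fun_prop)).mp (h.congr_fun (fun t ht => ?_) measurableSet_Ioi)
  simp [norm_exp, abs_of_pos (mem_Ioi.mp ht)]

lemma tendsto_add_mul_cexp_neg_mul_atTop {s : ℂ} (hs : 0 < s.re) (c : ℂ) :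
    Tendsto (fun t : ℝ => (t + c) * cexp (-(s * t))) atTop (𝓝 0) := by
  rw [tendsto_zero_iff_norm_tendsto_zero]
  have h := ((Real.tendsto_pow_mul_exp_neg_atTop_nhds_zero 1).const_mul s.re⁻¹ |>.add
    (Real.tendsto_exp_neg_atTop_nhds_zero.const_mul ‖c‖)).comp
    (tendsto_id.const_mul_atTop hs)
  simp only [mul_zero, add_zero] at h
  refine squeeze_zero' (Eventually.of_forall fun t => norm_nonneg _) ?_ h
  filter_upwards [eventually_ge_atTop 0] with t ht
  have hc : ‖(t : ℂ) + c‖ ≤ t + ‖c‖ := (norm_add_le _ _).trans (by simp [abs_of_nonneg ht])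
  simp only [norm_mul, norm_exp, Function.comp_apply, id, pow_one]
  have hre : (-(s * t)).re = -(s.re * t) := by simp
  rw [hre, mul_assoc, inv_mul_cancel_left₀ hs.ne', ← add_mul]
  gcongr

lemma integral_mul_cexp_neg_mul_Ioi {s : ℂ} (hs : 0 < s.re) :
    ∫ t in Ioi (0 : ℝ), (t : ℂ) * cexp (-(s * t)) = (s ^ 2)⁻¹ := by
  have hs0 : s ≠ 0 := by rintro rfl; simp at hs
  have hF : ∀ t : ℝ, HasDerivAt (fun t : ℝ => -s⁻¹ * ((t + s⁻¹) * cexp (-(s * t))))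
      (t * cexp (-(s * t))) t := by
    intro t
    have hid : HasDerivAt (fun t : ℝ => (t : ℂ)) 1 t := ofRealCLM.hasDerivAt
    refine (((hid.add_const s⁻¹).mul (hid.const_mul s).neg.cexp).const_mul (-s⁻¹)).congr_deriv ?_
    simp only [Pi.neg_apply]
    field_simp
    ring
  rw [integral_Ioi_of_hasDerivAt_of_tendsto' (fun t _ => hF t)
    (integrableOn_mul_cexp_neg_mul_Ioi hs)
    (by simpa using (tendsto_add_mul_cexp_neg_mul_atTop hs s⁻¹).const_mul (-s⁻¹))]
  simp
  ring

lemma ofReal_sub_ne_zero_of_im_ne_zero {z : ℂ} (hz : z.im ≠ 0) (x : ℝ) : (x : ℂ) - z ≠ 0 :=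
  fun h => hz (by simpa using congrArg im h)

lemma continuous_inv_ofReal_sub_sq {z : ℂ} (hz : z.im ≠ 0) :
    Continuous (fun x : ℝ => ((x - z) ^ 2)⁻¹) :=
  by fun_prop (disch := exact fun x => pow_ne_zero _ (ofReal_sub_ne_zero_of_im_ne_zero hz x))

lemma integrable_inv_ofReal_sub_sq {z : ℂ} (hz : z.im ≠ 0) :
    Integrable (fun x : ℝ => ((x - z) ^ 2)⁻¹) := by
  have h := ((integrable_inv_one_add_sq.comp_div hz).comp_sub_right z.re).const_mul (z.im ^ 2)⁻¹
  refine h.mono' (continuous_inv_ofReal_sub_sq hz).aestronglyMeasurable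
    (Eventually.of_forall fun x => le_of_eq ?_)
  rw [norm_inv, norm_pow, Complex.sq_norm, normSq_apply]
  simp only [sub_re, ofReal_re, sub_im, ofReal_im, zero_sub]
  field_simp
  ring

-- `t₊ e^(i t z)`; written with `max` rather than an indicator so that it is visibly continuous,
-- as Fourier inversion needs.
noncomputable def rampExp (z : ℂ) (t : ℝ) : ℂ := (max t 0 : ℝ) * cexp (I * t * z)

lemma rampExp_of_nonneg (z : ℂ) {t : ℝ} (ht : 0 ≤ t) : rampExp z t = t * cexp (I * t * z) := by
  simp [rampExp, ht]

lemma rampExp_of_nonpos (z : ℂ) {t : ℝ} (ht : t ≤ 0) : rampExp z t = 0 := by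
  simp [rampExp, ht]

lemma rampExp_eq_indicator (z : ℂ) :
    rampExp z = (Ioi 0).indicator (fun t : ℝ => t * cexp (I * t * z)) := by
  ext t
  rcases lt_or_ge 0 t with ht | ht
  · simp [rampExp, ht, ht.le]
  · simp [rampExp, ht, not_lt.mpr ht]

lemma continuous_rampExp (z : ℂ) : Continuous (rampExp z) := by
  unfold rampExp; fun_prop

lemma integrable_rampExp {z : ℂ} (hz : 0 < z.im) : Integrable (rampExp z) := by
  rw [rampExp_eq_indicator, integrable_indicator_iff measurableSet_Ioi]
  refine (integrableOn_mul_cexp_neg_mul_Ioi (s := -(I * z)) (by simpa using hz)).congr_fun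
    (fun t _ => ?_) measurableSet_Ioi
  ring_nf

lemma fourier_rampExp {z : ℂ} (hz : 0 < z.im) (ξ : ℝ) :
    𝓕 (rampExp z) ξ = -((2 * π * ξ - z) ^ 2)⁻¹ := by
  have hs : 0 < (I * (2 * π * ξ - z)).re := by simpa using hz
  rw [show -((2 * π * ξ - z) ^ 2)⁻¹ = ((I * (2 * π * ξ - z)) ^ 2)⁻¹ by
      rw [mul_pow, I_sq, neg_one_mul, inv_neg],
    ← integral_mul_cexp_neg_mul_Ioi hs, ← integral_indicator measurableSet_Ioi,
    Real.fourier_real_eq_integral_exp_smul, rampExp_eq_indicator]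
  congr 1 with v
  by_cases hv : v ∈ Ioi 0
  · simp only [indicator_of_mem hv, smul_eq_mul]
    rw [mul_left_comm, ← Complex.exp_add]
    push_cast
    ring_nf
  · simp [indicator_of_notMem hv]

lemma integrable_fourier_rampExp {z : ℂ} (hz : 0 < z.im) : Integrable (𝓕 (rampExp z)) := by
  have h := ((integrable_inv_ofReal_sub_sq hz.ne').comp_mul_left' (by positivity : 2 * π ≠ 0)).neg
  refine h.congr (Eventually.of_forall fun ξ => ?_)
  simp [fourier_rampExp hz, mul_assoc]

lemma integral_cexp_mul_inv_ofReal_sub_sq {z : ℂ} (hz : 0 < z.im) (t : ℝ) :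
    ∫ x : ℝ, cexp (x * t * I) * ((x - z) ^ 2)⁻¹ = -(2 * π) * rampExp z t := by
  have hinv := (integrable_rampExp hz).fourierInv_fourier_eq (integrable_fourier_rampExp hz)
    (continuous_rampExp z).continuousAt (v := t)
  rw [Real.fourierInv_eq_fourier_neg, Real.fourier_real_eq_integral_exp_smul] at hinv
  have hscale := Measure.integral_comp_mul_left
    (fun x : ℝ => cexp (x * t * I) * ((x - z) ^ 2)⁻¹) (2 * π)
  have hlhs : ∫ x : ℝ, cexp (↑(2 * π * x) * t * I) * ((↑(2 * π * x) - z) ^ 2)⁻¹ = -rampExp z t := by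
    rw [← hinv, ← integral_neg]
    congr 1 with v
    simp only [fourier_rampExp hz, smul_eq_mul, mul_neg, neg_neg]
    push_cast
    ring_nf
  rw [hlhs, abs_of_pos (by positivity), Complex.real_smul] at hscale
  have h2π : (2 * π : ℂ) ≠ 0 := by exact_mod_cast (by positivity : (2 * π : ℝ) ≠ 0)
  push_cast at hscale
  rw [eq_inv_mul_iff_mul_eq₀ h2π] at hscale
  rw [← hscale]
  ring

lemma integrable_cexp_mul_inv_ofReal_sub_sq {z : ℂ} (hz : z.im ≠ 0) (t : ℝ) :
    Integrable (fun x : ℝ => cexp (x * t * I) * ((x - z) ^ 2)⁻¹) :=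
  (integrable_inv_ofReal_sub_sq hz).bdd_mul (c := 1) (by fun_prop)
    (Eventually.of_forall fun x => by exact_mod_cast (norm_exp_ofReal_mul_I (x * t)).le)

lemma integral_sin_mul_inv_ofReal_sub_sq {z : ℂ} (hz : 0 < z.im) {c : ℝ} (hc : 0 < c) :
    ∫ x : ℝ, (Real.sin (c * x) : ℂ) * ((x - z) ^ 2)⁻¹ = I * π * c * cexp (I * c * z) := by
  have hsin : ∀ x : ℝ, (Real.sin (c * x) : ℂ) * ((x - z) ^ 2)⁻¹ = (2 * I)⁻¹ *
      (cexp (x * c * I) * ((x - z) ^ 2)⁻¹ - cexp (x * ↑(-c) * I) * ((x - z) ^ 2)⁻¹) := by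
    intro x
    rw [ofReal_sin, Complex.sin, mul_inv, inv_I]
    push_cast
    ring_nf
  simp_rw [hsin]
  rw [integral_const_mul, integral_sub (integrable_cexp_mul_inv_ofReal_sub_sq hz.ne' _)
      (integrable_cexp_mul_inv_ofReal_sub_sq hz.ne' _),
    integral_cexp_mul_inv_ofReal_sub_sq hz, integral_cexp_mul_inv_ofReal_sub_sq hz,
    rampExp_of_nonneg z hc.le, rampExp_of_nonpos z (by linarith), mul_inv, inv_I]
  ring

lemma integral_tsum_mul_of_norm_le_one {X ι : Type*} [MeasurableSpace X] {μ : Measure X}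
    [Countable ι] {c : ι → ℂ} (hc : Summable (‖c ·‖)) {f : ι → X → ℂ}
    (hf : ∀ n, AEStronglyMeasurable (f n) μ) (hf_le : ∀ n x, ‖f n x‖ ≤ 1)
    {g : X → ℂ} (hg : Integrable g μ) :
    ∫ x, (∑' n, c n * f n x) * g x ∂μ = ∑' n, c n * ∫ x, f n x * g x ∂μ := by
  have hint : ∀ n, Integrable (fun x => c n * (f n x * g x)) μ := fun n =>
    (hg.bdd_mul (hf n) (Eventually.of_forall (hf_le n))).const_mul (c n)
  have hnorm : ∀ n, ∫ x, ‖c n * (f n x * g x)‖ ∂μ ≤ ‖c n‖ * ∫ x, ‖g x‖ ∂μ := fun n => by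
    rw [← integral_const_mul]
    refine integral_mono (hint n).norm (hg.norm.const_mul _) fun x => ?_
    simp only [norm_mul]
    gcongr
    exact mul_le_of_le_one_left (norm_nonneg _) (hf_le n x)
  have hsum : Summable fun n => ∫ x, ‖c n * (f n x * g x)‖ ∂μ :=
    .of_nonneg_of_le (fun n => integral_nonneg fun x => norm_nonneg _) hnorm (hc.mul_right _)
  simp_rw [← tsum_mul_right, mul_assoc, ← integral_const_mul]
  exact (integral_tsum_of_summable_integral_norm hint hsum).symm

lemma one_div_mul_conj_lusin {a : ℝ} (ha : a ≠ 0) (b x : ℝ) :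
    1 / (a : ℂ) * starRingEnd ℂ (lusin ((x - b) / a)) = a / π * ((x - (b + I * a)) ^ 2)⁻¹ := by
  have hne : (x : ℂ) - (b + I * a) ≠ 0 :=
    ofReal_sub_ne_zero_of_im_ne_zero (by simpa using ha) x
  have ha' : (a : ℂ) ≠ 0 := ofReal_ne_zero.mpr ha
  have hπ : (π : ℂ) ≠ 0 := ofReal_ne_zero.mpr pi_ne_zero
  rw [lusin, map_div₀, map_one, map_mul, map_pow, map_add, conj_ofReal, conj_ofReal, conj_I,
    show (((x - b) / a : ℝ) : ℂ) + -I = (x - (b + I * a)) / a by push_cast; field_simp; ring]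
  field_simp

theorem stmt_15_general (α β : ℝ) (hα : 1 < α) :
    ∀ a > (0 : ℝ), ∀ b : ℝ,
      (∫ x : ℝ, (R α β x : ℂ) * (1 / (a : ℂ)) * (starRingEnd ℂ) (lusin ((x - b) / a))) =
        Complex.I * a * Real.pi *
          ∑' n : ℕ, Complex.exp (Complex.I * Real.pi * (((n : ℝ) + 1) ^ β : ℝ) *
              ((b : ℂ) + Complex.I * a)) * ((((n : ℝ) + 1) ^ (β - α) : ℝ) : ℂ) := by
  intro a ha b
  set z : ℂ := b + I * a
  have hz : 0 < z.im := by simpa [z] using ha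
  have hsummable : Summable fun n : ℕ => ‖(a / π * ((n + 1 : ℝ) ^ α)⁻¹ : ℂ)‖ := by
    refine (((summable_nat_add_iff 1).mpr (summable_nat_rpow_inv.mpr hα)).mul_left (a / π)).congr
      fun n => ?_
    rw [← ofReal_div, ← ofReal_mul, norm_real, Real.norm_of_nonneg (by positivity)]
    push_cast
    rfl
  have hintegrand : ∀ x : ℝ,
      (R α β x : ℂ) * (1 / (a : ℂ)) * starRingEnd ℂ (lusin ((x - b) / a)) =
        (∑' n : ℕ, (a / π * ((n + 1 : ℝ) ^ α)⁻¹ : ℂ) * Real.sin (π * (n + 1 : ℝ) ^ β * x)) *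
          ((x - z) ^ 2)⁻¹ := by
    intro x
    rw [mul_assoc, one_div_mul_conj_lusin ha.ne', R, ofReal_tsum, ← tsum_mul_right,
      ← tsum_mul_right]
    congr 1 with n
    push_cast
    ring
  simp_rw [hintegrand]
  rw [integral_tsum_mul_of_norm_le_one hsummable (fun n => by fun_prop)
    (fun n x => by rw [norm_real, Real.norm_eq_abs]; exact abs_sin_le_one _)
    (integrable_inv_ofReal_sub_sq hz.ne'), ← tsum_mul_left]
  congr 1 with n
  have hn : (0 : ℝ) < n + 1 := by positivity
  rw [integral_sin_mul_inv_ofReal_sub_sq hz (by positivity), rpow_sub hn]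
  push_cast
  field_simp

theorem stmt_15 (α β : ℝ) (hα : 1 < α) (hβ : 0 < β) :
    ∀ a > (0 : ℝ), ∀ b : ℝ,
      (∫ x : ℝ, (R α β x : ℂ) * (1 / (a : ℂ)) * (starRingEnd ℂ) (lusin ((x - b) / a))) =
        Complex.I * a * Real.pi *
          ∑' n : ℕ, Complex.exp (Complex.I * Real.pi * (((n : ℝ) + 1) ^ β : ℝ) *
              ((b : ℂ) + Complex.I * a)) * ((((n : ℝ) + 1) ^ (β - α) : ℝ) : ℂ) :=
  stmt_15_general α β hα
end

section
/- Let (a_n) be a sequence of complex numbers and (λ_n) an increasing sequence of positive reals tending to infinity. Suppose there exist constants C₁, C₂, C₃ > 0, α>1 and β>α−1 with |a_n| ≤ C₁ n^{−α} and C₂ n^β ≤ λ_n ≤ C₃ n^β for all n ≥ 1. Then the function S(x) = ∑_{n=1}^∞ a_n e^{i λ_n x} is uniformly Hölder continuous on ℝ with exponent (α−1)/β: there exists C>0 with |S(x) − S(y)| ≤ C|x−y|^{(α−1)/β} for all x,y ∈ ℝ. -/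
open Real Complex Filter Finset

/-!
With `h = |x - y|`, the `n`-th term of `S x - S y` has norm at most
`2 |a n| min 1 (λ n h) ≲ (n + 1) ^ (-α) min 1 ((n + 1) ^ β h)`. Split the sum at
`N ≈ h ^ (-1 / β)`: the head is `≲ h ∑_{n < N} (n + 1) ^ (β - α) ≲ h N ^ (β - α + 1)` because
`β - α > -1`, and the tail is `≲ ∑_{n ≥ N} (n + 1) ^ (-α) ≲ N ^ (1 - α)` because `α > 1`; both
are `≲ h ^ ((α - 1) / β)`. The power sums are compared with integrals of `x ^ q`.
-/

lemma norm_exp_I_mul_ofReal_sub_one_le_two_mul_min (θ : ℝ) :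
    ‖Complex.exp (Complex.I * θ) - 1‖ ≤ 2 * min 1 |θ| := by
  have h2 : ‖Complex.exp (Complex.I * θ) - 1‖ ≤ 2 := by
    calc _ ≤ ‖Complex.exp (Complex.I * θ)‖ + ‖(1 : ℂ)‖ := norm_sub_le _ _
      _ = 2 := by rw [Complex.norm_exp_I_mul_ofReal, norm_one]; norm_num
  have hθ : ‖Complex.exp (Complex.I * θ) - 1‖ ≤ |θ| := norm_exp_I_mul_ofReal_sub_one_le
  rw [mul_min_of_nonneg _ _ zero_le_two, mul_one]
  exact le_min h2 (hθ.trans (by linarith [abs_nonneg θ]))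

lemma norm_exp_I_mul_sub_exp_I_mul_le (l x y : ℝ) :
    ‖Complex.exp (Complex.I * l * x) - Complex.exp (Complex.I * l * y)‖ ≤
      2 * min 1 (|l| * |x - y|) := by
  have hfactor : Complex.exp (Complex.I * l * x) - Complex.exp (Complex.I * l * y) =
      Complex.exp (Complex.I * ↑(l * y)) * (Complex.exp (Complex.I * ↑(l * (x - y))) - 1) := by
    rw [mul_sub, ← Complex.exp_add, mul_one]
    push_cast
    ring_nf
  rw [hfactor, norm_mul, Complex.norm_exp_I_mul_ofReal, one_mul, ← abs_mul]
  exact norm_exp_I_mul_ofReal_sub_one_le_two_mul_min _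

lemma norm_tsum_exp_sub_tsum_exp_le {ι : Type*} {a : ι → ℂ} {lam w Λ : ι → ℝ}
    (hw : Summable w) (ha : ∀ n, ‖a n‖ ≤ w n) (hlam : ∀ n, |lam n| ≤ Λ n) (x y : ℝ) :
    ‖∑' n, a n * Complex.exp (Complex.I * lam n * x) -
        ∑' n, a n * Complex.exp (Complex.I * lam n * y)‖ ≤
      2 * ∑' n, w n * min 1 (Λ n * |x - y|) := by
  have hw₀ (n : ι) : 0 ≤ w n := (norm_nonneg _).trans (ha n)
  have hΛ₀ (n : ι) : 0 ≤ Λ n := (abs_nonneg _).trans (hlam n)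
  have hsummable (t : ℝ) : Summable fun n => a n * Complex.exp (Complex.I * lam n * t) := by
    refine .of_norm_bounded hw fun n => ?_
    rw [norm_mul, mul_assoc, ← ofReal_mul, norm_exp_I_mul_ofReal, mul_one]
    exact ha n
  have hbound : Summable fun n => 2 * (w n * min 1 (Λ n * |x - y|)) :=
    (hw.mul_left 2).of_nonneg_of_le (fun n => by have := hw₀ n; have := hΛ₀ n; positivity)
      fun n => by gcongr; exact mul_le_of_le_one_right (hw₀ n) (min_le_left _ _)
  rw [← (hsummable x).tsum_sub (hsummable y), ← tsum_mul_left]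
  refine tsum_of_norm_bounded hbound.hasSum fun n => ?_
  rw [← mul_sub, norm_mul, mul_left_comm]
  refine mul_le_mul (ha n) ((norm_exp_I_mul_sub_exp_I_mul_le _ _ _).trans ?_) (norm_nonneg _)
    (hw₀ n)
  gcongr
  exact hlam n

section PowerSums

variable {q α β : ℝ}

lemma summable_nat_add_one_rpow_neg (hα : 1 < α) :
    Summable fun n : ℕ => ((n : ℝ) + 1) ^ (-α) := by
  have := (summable_nat_add_iff 1).2 (Real.summable_nat_rpow.2 (neg_lt_neg hα))
  exact this.congr fun n => by push_cast; rfl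

lemma sum_range_nat_add_one_rpow_le_of_nonneg (hq : 0 ≤ q) (N : ℕ) :
    ∑ n ∈ range N, ((n : ℝ) + 1) ^ q ≤ (N : ℝ) ^ (q + 1) := by
  calc ∑ n ∈ range N, ((n : ℝ) + 1) ^ q ≤ ∑ _n ∈ range N, (N : ℝ) ^ q := by
        gcongr with n hn
        exact_mod_cast Nat.succ_le_of_lt (mem_range.1 hn)
    _ = (N : ℝ) ^ (q + 1) := by
        rcases N.eq_zero_or_pos with rfl | hN
        · simp [zero_rpow (by linarith : q + 1 ≠ 0)]
        · rw [sum_const, card_range, nsmul_eq_mul, rpow_add_one (by positivity), mul_comm]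

lemma sum_range_nat_add_one_rpow_le_of_nonpos (hq₁ : -1 < q) (hq₀ : q ≤ 0) (N : ℕ) :
    ∑ n ∈ range N, ((n : ℝ) + 1) ^ q ≤ (q + 1)⁻¹ * (N : ℝ) ^ (q + 1) := by
  have hp : 0 < q + 1 := by linarith
  cases N with
  | zero => simp [zero_rpow hp.ne']
  | succ N =>
    -- The comparison with `∫ x ^ q` starts at `1`: `0 ^ q = 0` breaks antitonicity at `0`.
    have hanti : AntitoneOn (fun x : ℝ => x ^ q) (Set.Icc 1 (1 + N)) := fun x hx y _ hxy =>
      rpow_le_rpow_of_nonpos (by linarith [hx.1]) hxy hq₀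
    have hint := hanti.sum_le_integral
    rw [integral_rpow (Or.inl hq₁), one_rpow] at hint
    have hshift (n : ℕ) : ((n + 1 : ℕ) : ℝ) + 1 = 1 + ((n + 1 : ℕ) : ℝ) := add_comm _ _
    rw [sum_range_succ']
    simp only [hshift, Nat.cast_zero, zero_add, one_rpow]
    have hinv : 1 ≤ (q + 1)⁻¹ := one_le_inv_iff₀.2 ⟨hp, by linarith⟩
    rw [div_eq_inv_mul, mul_sub, mul_one] at hint
    rw [show ((N + 1 : ℕ) : ℝ) = 1 + N by push_cast; ring]
    linarith

lemma sum_range_nat_add_one_rpow_le (hq : -1 < q) (N : ℕ) :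
    ∑ n ∈ range N, ((n : ℝ) + 1) ^ q ≤ max 1 (q + 1)⁻¹ * (N : ℝ) ^ (q + 1) := by
  have hN : 0 ≤ (N : ℝ) ^ (q + 1) := by positivity
  rcases le_total 0 q with hq₀ | hq₀
  · exact (sum_range_nat_add_one_rpow_le_of_nonneg hq₀ N).trans
      (le_mul_of_one_le_left hN (le_max_left _ _))
  · exact (sum_range_nat_add_one_rpow_le_of_nonpos hq hq₀ N).trans
      (mul_le_mul_of_nonneg_right (le_max_right _ _) hN)

lemma tsum_nat_add_one_rpow_neg_le (hα : 1 < α) (N : ℕ) :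
    ∑' n : ℕ, (((n + N : ℕ) : ℝ) + 1) ^ (-α) ≤ α / (α - 1) * ((N : ℝ) + 1) ^ (1 - α) := by
  have hα₁ : 0 < α - 1 := by linarith
  have hanti : AntitoneOn (fun x : ℝ => x ^ (-α)) (Set.Ici ((N + 1 : ℕ) : ℝ)) :=
    fun x hx y _ hxy => rpow_le_rpow_of_nonpos (lt_of_lt_of_le (by positivity) hx) hxy
      (by linarith)
  have hint := hanti.tsum_comp_add_le_integral (N + 1)
    (integrableOn_Ioi_rpow_of_lt (by linarith) (by positivity))
    (fun t ht => rpow_nonneg (lt_trans (by positivity) ht).le _)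
  rw [integral_Ioi_rpow_of_lt (by linarith) (by positivity)] at hint
  have hsum : Summable fun n : ℕ => (((n + N : ℕ) : ℝ) + 1) ^ (-α) :=
    (summable_nat_add_iff N).2 (summable_nat_add_one_rpow_neg hα)
  rw [hsum.tsum_eq_zero_add]
  have hfirst : ((N : ℝ) + 1) ^ (-α) ≤ ((N : ℝ) + 1) ^ (1 - α) :=
    rpow_le_rpow_of_exponent_le (by linarith) (by linarith)
  calc (((0 + N : ℕ) : ℝ) + 1) ^ (-α) + ∑' n : ℕ, (((n + 1 + N : ℕ) : ℝ) + 1) ^ (-α)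
      = ((N : ℝ) + 1) ^ (-α) + ∑' n : ℕ, (((n + (N + 1) + 1 : ℕ) : ℝ)) ^ (-α) := by
        congr 1
        · simp
        · congr 1 with n; push_cast; ring_nf
    _ ≤ ((N : ℝ) + 1) ^ (1 - α) + ((N : ℝ) + 1) ^ (1 - α) / (α - 1) := by
        push_cast at hint ⊢
        rw [show -α + 1 = 1 - α by ring, neg_div, ← div_neg, neg_sub] at hint
        linarith
    _ = α / (α - 1) * ((N : ℝ) + 1) ^ (1 - α) := by field_simp; ring

lemma sum_range_rpow_neg_mul_min_one_le (hβ₀ : 0 < β) (hβ : α - 1 < β) {h : ℝ} (hh : 0 < h)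
    {N : ℕ} (hN : (N : ℝ) ≤ h ^ (-β⁻¹)) :
    ∑ n ∈ range N, ((n : ℝ) + 1) ^ (-α) * min 1 (((n : ℝ) + 1) ^ β * h) ≤
      max 1 (β - α + 1)⁻¹ * h ^ ((α - 1) / β) := by
  have hexp : 1 + -β⁻¹ * (β - α + 1) = (α - 1) / β := by field_simp; ring
  calc ∑ n ∈ range N, ((n : ℝ) + 1) ^ (-α) * min 1 (((n : ℝ) + 1) ^ β * h)
      ≤ ∑ n ∈ range N, h * ((n : ℝ) + 1) ^ (β - α) := by
        refine sum_le_sum fun n _ => ?_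
        calc _ ≤ ((n : ℝ) + 1) ^ (-α) * (((n : ℝ) + 1) ^ β * h) :=
              mul_le_mul_of_nonneg_left (min_le_right _ _) (by positivity)
          _ = h * ((n : ℝ) + 1) ^ (β - α) := by
              rw [sub_eq_add_neg, rpow_add (by positivity)]; ring
    _ = h * ∑ n ∈ range N, ((n : ℝ) + 1) ^ (β - α) := (mul_sum ..).symm
    _ ≤ h * (max 1 (β - α + 1)⁻¹ * (N : ℝ) ^ (β - α + 1)) := by
        gcongr; exact sum_range_nat_add_one_rpow_le (by linarith) N
    _ ≤ h * (max 1 (β - α + 1)⁻¹ * (h ^ (-β⁻¹)) ^ (β - α + 1)) := by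
        have : 0 ≤ β - α + 1 := by linarith
        gcongr
    _ = max 1 (β - α + 1)⁻¹ * h ^ ((α - 1) / β) := by
        rw [← rpow_mul hh.le, mul_left_comm, ← hexp, rpow_add hh, rpow_one]

lemma tsum_rpow_neg_mul_min_one_nat_add_le (hα : 1 < α) (hβ : 0 < β) {h : ℝ} (hh : 0 < h)
    {N : ℕ} (hN : h ^ (-β⁻¹) ≤ N + 1) :
    ∑' n : ℕ, (((n + N : ℕ) : ℝ) + 1) ^ (-α) * min 1 ((((n + N : ℕ) : ℝ) + 1) ^ β * h) ≤
      α / (α - 1) * h ^ ((α - 1) / β) := calc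
  _ ≤ ∑' n : ℕ, (((n + N : ℕ) : ℝ) + 1) ^ (-α) := by
      have hsummable := (summable_nat_add_iff N).2 (summable_nat_add_one_rpow_neg hα)
      have hle (n : ℕ) :=
        mul_le_of_le_one_right (rpow_nonneg (by positivity : (0 : ℝ) ≤ ↑(n + N) + 1) (-α))
          (min_le_left 1 ((((n + N : ℕ) : ℝ) + 1) ^ β * h))
      exact (hsummable.of_nonneg_of_le (fun n => by positivity) hle).tsum_le_tsum hle hsummable
  _ ≤ α / (α - 1) * ((N : ℝ) + 1) ^ (1 - α) := tsum_nat_add_one_rpow_neg_le hα N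
  _ ≤ α / (α - 1) * (h ^ (-β⁻¹)) ^ (1 - α) := by
      refine mul_le_mul_of_nonneg_left ?_ (div_nonneg (by linarith) (by linarith))
      exact rpow_le_rpow_of_nonpos (by positivity) hN (by linarith)
  _ = α / (α - 1) * h ^ ((α - 1) / β) := by
      rw [← rpow_mul hh.le]; congr 2; field_simp; ring

theorem tsum_rpow_neg_mul_min_one_le (hα : 1 < α) (hβ : α - 1 < β) {h : ℝ} (hh : 0 ≤ h) :
    ∑' n : ℕ, ((n : ℝ) + 1) ^ (-α) * min 1 (((n : ℝ) + 1) ^ β * h) ≤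
      (max 1 (β - α + 1)⁻¹ + α / (α - 1)) * h ^ ((α - 1) / β) := by
  have hβ₀ : 0 < β := by linarith
  have hγ : 0 < (α - 1) / β := div_pos (by linarith) hβ₀
  rcases hh.eq_or_lt with rfl | hh
  · simp [zero_rpow hγ.ne']
  have hsummable : Summable fun n : ℕ => ((n : ℝ) + 1) ^ (-α) * min 1 (((n : ℝ) + 1) ^ β * h) :=
    (summable_nat_add_one_rpow_neg hα).of_nonneg_of_le (fun n => by positivity)
      fun n => mul_le_of_le_one_right (by positivity) (min_le_left _ _)
  rw [← hsummable.sum_add_tsum_nat_add ⌊h ^ (-β⁻¹)⌋₊, add_mul]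
  exact add_le_add (sum_range_rpow_neg_mul_min_one_le hβ₀ hβ hh (Nat.floor_le (by positivity)))
    (tsum_rpow_neg_mul_min_one_nat_add_le hα hβ₀ hh (Nat.lt_floor_add_one _).le)

end PowerSums

theorem stmt_17_general (a : ℕ → ℂ) (lam : ℕ → ℝ)
    (hpos : ∀ n, 0 < lam n)
    (C₁ C₃ α β : ℝ) (hC₁ : 0 < C₁) (hC₃ : 0 < C₃)
    (hα : 1 < α) (hβ : α - 1 < β)
    (ha : ∀ n : ℕ, ‖a n‖ ≤ C₁ * ((n : ℝ) + 1) ^ (-α))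
    (hlam₂ : ∀ n : ℕ, lam n ≤ C₃ * ((n : ℝ) + 1) ^ β) :
    ∃ C > (0 : ℝ), ∀ x y : ℝ,
      ‖(∑' n : ℕ, a n * Complex.exp (Complex.I * (lam n : ℂ) * (x : ℂ))) -
        (∑' n : ℕ, a n * Complex.exp (Complex.I * (lam n : ℂ) * (y : ℂ)))‖ ≤
        C * |x - y| ^ ((α - 1) / β) := by
  set K := max 1 (β - α + 1)⁻¹ + α / (α - 1)
  refine ⟨2 * C₁ * K * C₃ ^ ((α - 1) / β), by positivity, fun x y => ?_⟩
  have hlam (n : ℕ) : |lam n| ≤ C₃ * ((n : ℝ) + 1) ^ β := (abs_of_pos (hpos n)).trans_le (hlam₂ n)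
  calc _ ≤ 2 * ∑' n : ℕ, C₁ * ((n : ℝ) + 1) ^ (-α) * min 1 (C₃ * ((n : ℝ) + 1) ^ β * |x - y|) :=
        norm_tsum_exp_sub_tsum_exp_le ((summable_nat_add_one_rpow_neg hα).mul_left C₁) ha hlam x y
    _ = 2 * C₁ * ∑' n : ℕ, ((n : ℝ) + 1) ^ (-α) * min 1 (((n : ℝ) + 1) ^ β * (C₃ * |x - y|)) := by
        rw [mul_assoc 2 C₁]
        congr 1
        rw [← tsum_mul_left]
        exact tsum_congr fun n => by ring_nf
    _ ≤ 2 * C₁ * (K * (C₃ * |x - y|) ^ ((α - 1) / β)) := by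
        gcongr
        exact tsum_rpow_neg_mul_min_one_le hα hβ (by positivity)
    _ = 2 * C₁ * K * C₃ ^ ((α - 1) / β) * |x - y| ^ ((α - 1) / β) := by
        rw [mul_rpow hC₃.le (abs_nonneg _)]
        ring

theorem stmt_17 (a : ℕ → ℂ) (lam : ℕ → ℝ) (hmono : StrictMono lam)
    (hpos : ∀ n, 0 < lam n) (hlim : Tendsto lam atTop atTop)
    (C₁ C₂ C₃ α β : ℝ) (hC₁ : 0 < C₁) (hC₂ : 0 < C₂) (hC₃ : 0 < C₃)
    (hα : 1 < α) (hβ : α - 1 < β)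
    (ha : ∀ n : ℕ, ‖a n‖ ≤ C₁ * ((n : ℝ) + 1) ^ (-α))
    (hlam₁ : ∀ n : ℕ, C₂ * ((n : ℝ) + 1) ^ β ≤ lam n)
    (hlam₂ : ∀ n : ℕ, lam n ≤ C₃ * ((n : ℝ) + 1) ^ β) :
    ∃ C > (0 : ℝ), ∀ x y : ℝ,
      ‖(∑' n : ℕ, a n * Complex.exp (Complex.I * (lam n : ℂ) * (x : ℂ))) -
        (∑' n : ℕ, a n * Complex.exp (Complex.I * (lam n : ℂ) * (y : ℂ)))‖ ≤
        C * |x - y| ^ ((α - 1) / β) :=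
  stmt_17_general a lam hpos C₁ C₃ α β hC₁ hC₃ hα hβ ha hlam₂
end

section
/- Let α>1 and β>α−1. Then R_{α,β}(x) = ∑_{n=1}^∞ sin(π n^β x)/n^α is uniformly Hölder continuous on ℝ with exponent (α−1)/β, i.e. there exists C>0 such that |R_{α,β}(x) − R_{α,β}(y)| ≤ C |x−y|^{(α−1)/β} for all x,y ∈ ℝ. -/
/-!
Put `h = |x - y|` and let `d n` be the `n`-th term of `R α β x - R α β y`. As `sin` is
1-Lipschitz, `|d n| ≤ π h (n + 1) ^ (β - α)`, and trivially `|d n| ≤ 2 (n + 1) ^ (-α)`.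
For `h < 1` cut the series at `N ≈ h ^ (-1 / β)`: the first bound summed over `n < N` is
`≲ h N ^ (β - α + 1)` because `β - α > -1`, the second summed over `n ≥ N` is
`≲ N ^ (1 - α)`, and both are `≍ h ^ ((α - 1) / β)` for this `N`.
For `h ≥ 1` the second bound alone suffices.
-/

open Real

open Finset Set

lemma summable_natCast_add_one_rpow_neg {α : ℝ} (hα : 1 < α) :
    Summable fun n : ℕ => ((n : ℝ) + 1) ^ (-α) := by
  have := (summable_nat_add_iff 1).2 (Real.summable_nat_rpow.2 (by linarith : -α < -1))
  exact this.congr fun n => by push_cast; rfl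

lemma mul_rpow_sub_one_le_rpow_sub_rpow {p x : ℝ} (hp0 : 0 ≤ p) (hp1 : p ≤ 1) (hx : 0 ≤ x) :
    p * (x + 1) ^ (p - 1) ≤ (x + 1) ^ p - x ^ p := by
  have hb : 0 < x + 1 := by linarith
  have hbp : 0 < (x + 1) ^ p := by positivity
  have bernoulli := rpow_one_add_le_one_add_mul_self
    (s := -1 / (x + 1)) (by rw [neg_div, neg_le_neg_iff, div_le_one hb]; linarith) hp0 hp1
  rw [show 1 + -1 / (x + 1) = x / (x + 1) by field_simp; ring, div_rpow hx hb.le,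
    div_le_iff₀ hbp] at bernoulli
  rw [rpow_sub_one hb.ne']
  calc p * ((x + 1) ^ p / (x + 1)) = (x + 1) ^ p - (1 + p * (-1 / (x + 1))) * (x + 1) ^ p := by
        ring
    _ ≤ (x + 1) ^ p - x ^ p := by linarith

lemma mul_sum_range_rpow_le_of_nonpos {γ : ℝ} (hγ1 : -1 < γ) (hγ0 : γ ≤ 0) (N : ℕ) :
    (γ + 1) * ∑ i ∈ range N, ((i : ℝ) + 1) ^ γ ≤ (N : ℝ) ^ (γ + 1) := by
  calc (γ + 1) * ∑ i ∈ range N, ((i : ℝ) + 1) ^ γ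
      = ∑ i ∈ range N, (γ + 1) * ((i : ℝ) + 1) ^ (γ + 1 - 1) := by
        rw [mul_sum]; simp only [add_sub_cancel_right]
    _ ≤ ∑ i ∈ range N, ((((i + 1 : ℕ) : ℝ)) ^ (γ + 1) - ((i : ℕ) : ℝ) ^ (γ + 1)) := by
        gcongr with i
        push_cast
        exact mul_rpow_sub_one_le_rpow_sub_rpow (by linarith) (by linarith) i.cast_nonneg
    _ = (N : ℝ) ^ (γ + 1) := by
        rw [sum_range_sub (fun i : ℕ => (i : ℝ) ^ (γ + 1))]
        simp [zero_rpow (by linarith : γ + 1 ≠ 0)]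

lemma sum_range_rpow_le_of_nonneg {γ : ℝ} (hγ : 0 ≤ γ) (N : ℕ) :
    ∑ i ∈ range N, ((i : ℝ) + 1) ^ γ ≤ (N : ℝ) ^ (γ + 1) := by
  calc ∑ i ∈ range N, ((i : ℝ) + 1) ^ γ ≤ ∑ _i ∈ range N, (N : ℝ) ^ γ := by
        gcongr with i hi
        exact_mod_cast mem_range.1 hi
    _ = (N : ℝ) ^ (γ + 1) := by
        rw [sum_const, card_range, nsmul_eq_mul, rpow_add_one' N.cast_nonneg (by linarith),
          mul_comm]

lemma sum_range_rpow_le {γ : ℝ} (hγ : -1 < γ) (N : ℕ) :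
    ∑ i ∈ range N, ((i : ℝ) + 1) ^ γ ≤ max 1 (γ + 1)⁻¹ * (N : ℝ) ^ (γ + 1) := by
  have hNγ : 0 ≤ (N : ℝ) ^ (γ + 1) := by positivity
  rcases le_total 0 γ with hγ0 | hγ0
  · exact (sum_range_rpow_le_of_nonneg hγ0 N).trans
      (le_mul_of_one_le_left hNγ (le_max_left _ _))
  · calc ∑ i ∈ range N, ((i : ℝ) + 1) ^ γ ≤ (γ + 1)⁻¹ * (N : ℝ) ^ (γ + 1) := by
          rw [inv_mul_eq_div, le_div_iff₀ (by linarith), mul_comm]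
          exact mul_sum_range_rpow_le_of_nonpos hγ hγ0 N
      _ ≤ max 1 (γ + 1)⁻¹ * (N : ℝ) ^ (γ + 1) := by gcongr; exact le_max_right _ _

lemma tsum_rpow_nat_add_le {α : ℝ} (hα : 1 < α) {N : ℕ} (hN : 0 < N) :
    ∑' k : ℕ, (((k + N : ℕ) : ℝ) + 1) ^ (-α) ≤ (N : ℝ) ^ (1 - α) / (α - 1) := by
  have hN' : (0 : ℝ) < N := by exact_mod_cast hN
  have anti : AntitoneOn (fun t : ℝ => t ^ (-α)) (Ici (N : ℝ)) := fun a ha b _ hab =>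
    rpow_le_rpow_of_nonpos (hN'.trans_le ha) hab (by linarith)
  have integral_test := anti.tsum_comp_add_le_integral N
    (integrableOn_Ioi_rpow_of_lt (by linarith) hN') fun t ht =>
      (rpow_pos_of_pos (hN'.trans ht) _).le
  rw [integral_Ioi_rpow_of_lt (by linarith) hN'] at integral_test
  convert integral_test using 1
  · push_cast; rfl
  · rw [show -α + 1 = 1 - α by ring, neg_div, ← div_neg, neg_sub]

lemma tsum_le_mul_rpow_of_lt_one {α β A B h : ℝ} (hα : 1 < α) (hβ : α - 1 < β) (hA : 0 ≤ A)
    (hB : 0 ≤ B) (hh0 : 0 < h) (hh1 : h < 1) {d : ℕ → ℝ} (hd : ∀ n, 0 ≤ d n)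
    (hd_head : ∀ n : ℕ, d n ≤ A * h * ((n : ℝ) + 1) ^ (β - α))
    (hd_tail : ∀ n : ℕ, d n ≤ B * ((n : ℝ) + 1) ^ (-α)) :
    ∑' n, d n ≤ (A * (max 1 (β - α + 1)⁻¹ * 2 ^ (β - α + 1)) + B / (α - 1)) *
      h ^ ((α - 1) / β) := by
  have hβ0 : 0 < β := by linarith
  set t := h ^ (-β⁻¹) with ht_def
  have ht1 : 1 ≤ t := one_le_rpow_of_pos_of_le_one_of_nonpos hh0 hh1.le (by simp [hβ0.le])
  have ht0 : 0 < t := one_pos.trans_le ht1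
  have hh : h = t ^ (-β) := by
    rw [ht_def, ← rpow_mul hh0.le, neg_mul_neg, inv_mul_cancel₀ hβ0.ne', rpow_one]
  have hhθ : h ^ ((α - 1) / β) = t ^ (1 - α) := by
    rw [hh, ← rpow_mul ht0.le]; congr 1; field_simp; ring
  set N := ⌈t⌉₊
  have hN0 : 0 < N := Nat.ceil_pos.2 ht0
  have htN : t ≤ N := Nat.le_ceil t
  have hN2t : (N : ℝ) ≤ 2 * t := by linarith [Nat.ceil_lt_add_one ht0.le]
  have hsum : Summable d :=
    ((summable_natCast_add_one_rpow_neg hα).mul_left B).of_nonneg_of_le hd hd_tail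
  have head : ∑ n ∈ range N, d n ≤ A * (max 1 (β - α + 1)⁻¹ * 2 ^ (β - α + 1)) * t ^ (1 - α) :=
    calc ∑ n ∈ range N, d n ≤ ∑ n ∈ range N, A * h * ((n : ℝ) + 1) ^ (β - α) :=
          sum_le_sum fun n _ => hd_head n
      _ = A * h * ∑ n ∈ range N, ((n : ℝ) + 1) ^ (β - α) := by rw [mul_sum]
      _ ≤ A * h * (max 1 (β - α + 1)⁻¹ * (2 * t) ^ (β - α + 1)) := by
          gcongr
          exact (sum_range_rpow_le (by linarith) N).trans (by gcongr; linarith)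
      _ = A * (max 1 (β - α + 1)⁻¹ * 2 ^ (β - α + 1)) * t ^ (1 - α) := by
          rw [mul_rpow zero_le_two ht0.le, hh,
            show t ^ (1 - α) = t ^ (-β) * t ^ (β - α + 1) by rw [← rpow_add ht0]; ring_nf]
          ring
  have tail : ∑' k, d (k + N) ≤ B / (α - 1) * t ^ (1 - α) :=
    calc ∑' k, d (k + N) ≤ ∑' k : ℕ, B * (((k + N : ℕ) : ℝ) + 1) ^ (-α) :=
          Summable.tsum_le_tsum (fun k => hd_tail (k + N)) ((summable_nat_add_iff N).2 hsum)
            (((summable_nat_add_iff N).2 (summable_natCast_add_one_rpow_neg hα)).mul_left B)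
      _ ≤ B * ((N : ℝ) ^ (1 - α) / (α - 1)) := by
          rw [tsum_mul_left]; gcongr; exact tsum_rpow_nat_add_le hα hN0
      _ ≤ B * (t ^ (1 - α) / (α - 1)) := by
          have := rpow_le_rpow_of_nonpos ht0 htN (by linarith : 1 - α ≤ 0)
          gcongr B * (?_ / _)
      _ = B / (α - 1) * t ^ (1 - α) := by ring
  rw [← hsum.sum_add_tsum_nat_add N, hhθ]
  linarith

theorem exists_tsum_le_mul_rpow {α β : ℝ} (hα : 1 < α) (hβ : α - 1 < β) :
    ∃ C > 0, ∀ (A B h : ℝ) (d : ℕ → ℝ), 0 ≤ A → 0 ≤ B → 0 ≤ h → (∀ n, 0 ≤ d n) →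
      (∀ n : ℕ, d n ≤ A * h * ((n : ℝ) + 1) ^ (β - α)) →
      (∀ n : ℕ, d n ≤ B * ((n : ℝ) + 1) ^ (-α)) →
      ∑' n, d n ≤ C * (A + B) * h ^ ((α - 1) / β) := by
  set K := max 1 (β - α + 1)⁻¹ * 2 ^ (β - α + 1)
  set Z := ∑' n : ℕ, ((n : ℝ) + 1) ^ (-α)
  have hK : 0 ≤ K := by positivity
  have hZ : 0 ≤ Z := tsum_nonneg fun n => by positivity
  have hc : 0 < 1 / (α - 1) := one_div_pos.2 (by linarith)
  refine ⟨K + 1 / (α - 1) + Z, by positivity, fun A B h d hA hB hh hd hd_head hd_tail => ?_⟩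
  have hhθ : 0 ≤ h ^ ((α - 1) / β) := by positivity
  rcases hh.eq_or_lt with rfl | hh0
  · have hd0 : ∀ n, d n = 0 := fun n => le_antisymm (by simpa using hd_head n) (hd n)
    simp only [hd0, tsum_zero]
    positivity
  rcases lt_or_ge h 1 with hh1 | hh1
  · calc ∑' n, d n ≤ (A * K + B * (1 / (α - 1))) * h ^ ((α - 1) / β) := by
          rw [← div_eq_mul_one_div]
          exact tsum_le_mul_rpow_of_lt_one hα hβ hA hB hh0 hh1 hd hd_head hd_tail
      _ ≤ (K + 1 / (α - 1) + Z) * (A + B) * h ^ ((α - 1) / β) := by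
          gcongr
          nlinarith [mul_nonneg hA hc.le, mul_nonneg hA hZ, mul_nonneg hB hK, mul_nonneg hB hZ]
  · have hsum_tail := (summable_natCast_add_one_rpow_neg hα).mul_left B
    calc ∑' n, d n ≤ ∑' n : ℕ, B * ((n : ℝ) + 1) ^ (-α) :=
          Summable.tsum_le_tsum hd_tail (hsum_tail.of_nonneg_of_le hd hd_tail) hsum_tail
      _ = B * Z := tsum_mul_left
      _ ≤ (K + 1 / (α - 1) + Z) * (A + B) * 1 := by
          nlinarith [mul_nonneg hA hc.le, mul_nonneg hA hZ, mul_nonneg hB hK, mul_nonneg hB hc.le,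
            mul_nonneg hA hK]
      _ ≤ (K + 1 / (α - 1) + Z) * (A + B) * h ^ ((α - 1) / β) := by
          gcongr
          exact one_le_rpow hh1 (div_nonneg (by linarith) (by linarith))

noncomputable def sinTerm (α β x : ℝ) (n : ℕ) : ℝ :=
  sin (π * ((n : ℝ) + 1) ^ β * x) / ((n : ℝ) + 1) ^ α

lemma abs_sinTerm_le (α β x : ℝ) (n : ℕ) : |sinTerm α β x n| ≤ ((n : ℝ) + 1) ^ (-α) := by
  have hp : 0 < ((n : ℝ) + 1) ^ α := by positivity
  rw [sinTerm, abs_div, abs_of_pos hp, rpow_neg (by positivity), ← one_div]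
  exact div_le_div_of_nonneg_right (abs_sin_le_one _) hp.le

lemma abs_sinTerm_sub_sinTerm_le_two (α β x y : ℝ) (n : ℕ) :
    |sinTerm α β x n - sinTerm α β y n| ≤ 2 * ((n : ℝ) + 1) ^ (-α) :=
  (abs_sub _ _).trans (by linarith [abs_sinTerm_le α β x n, abs_sinTerm_le α β y n])

lemma abs_sinTerm_sub_sinTerm_le (α β x y : ℝ) (n : ℕ) :
    |sinTerm α β x n - sinTerm α β y n| ≤ π * |x - y| * ((n : ℝ) + 1) ^ (β - α) := by
  have hn : 0 < (n : ℝ) + 1 := by positivity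
  have hp : 0 < ((n : ℝ) + 1) ^ α := by positivity
  rw [sinTerm, sinTerm, ← sub_div, abs_div, abs_of_pos hp, div_le_iff₀ hp, mul_assoc (π * |x - y|),
    ← rpow_add hn, sub_add_cancel]
  calc _ ≤ |π * ((n : ℝ) + 1) ^ β * x - π * ((n : ℝ) + 1) ^ β * y| := abs_sin_sub_sin_le _ _
    _ = π * |x - y| * ((n : ℝ) + 1) ^ β := by
        rw [← mul_sub, abs_mul, abs_of_pos (by positivity)]; ring

lemma summable_sinTerm {α : ℝ} (hα : 1 < α) (β x : ℝ) : Summable (sinTerm α β x) :=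
  (summable_natCast_add_one_rpow_neg hα).of_norm_bounded (abs_sinTerm_le α β x)

theorem stmt_18 (α β : ℝ) (hα : 1 < α) (hβ : α - 1 < β) :
    ∃ C > (0 : ℝ), ∀ x y : ℝ,
      |R α β x - R α β y| ≤ C * |x - y| ^ ((α - 1) / β) := by
  obtain ⟨C, hC, htsum_le⟩ := exists_tsum_le_mul_rpow hα hβ
  refine ⟨C * (π + 2), by positivity, fun x y => ?_⟩
  have hsum : Summable fun n => |sinTerm α β x n - sinTerm α β y n| :=
    ((summable_natCast_add_one_rpow_neg hα).mul_left 2).of_nonneg_of_le (fun n => abs_nonneg _)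
      (abs_sinTerm_sub_sinTerm_le_two α β x y)
  calc |R α β x - R α β y| = |∑' n, (sinTerm α β x n - sinTerm α β y n)| := by
        rw [(summable_sinTerm hα β x).tsum_sub (summable_sinTerm hα β y)]; rfl
    _ ≤ ∑' n, |sinTerm α β x n - sinTerm α β y n| := by
        exact norm_tsum_le_tsum_norm (f := fun n => sinTerm α β x n - sinTerm α β y n) hsum
    _ ≤ C * (π + 2) * |x - y| ^ ((α - 1) / β) :=
        htsum_le π 2 |x - y| _ pi_pos.le zero_le_two (abs_nonneg _) (fun n => abs_nonneg _)
          (abs_sinTerm_sub_sinTerm_le α β x y) (abs_sinTerm_sub_sinTerm_le_two α β x y)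
end

section
/- Let α>1 and β>α−1, and suppose β ≥ α. Set N_a = ⌊((β−α)/(aπβ))^{1/β}⌋ + 1 for a ∈ (0,1]. Then a ∑_{n=1}^{N_a} e^{−aπ n^β} n^{β−α} ≤ π^{-1}·π·(((β−α)/(πβ))^{1/β} + 1)^{β−α+1} a^{(α−1)/β} for all a ∈ (0,1]. -/
open Real

noncomputable def Na (α β a : ℝ) : ℕ := ⌊((β - α) / (a * Real.pi * β)) ^ (1 / β)⌋₊ + 1

theorem stmt_19 (α β : ℝ) (hα : 1 < α) (hβ : α ≤ β) :
    ∀ a ∈ Set.Ioc (0 : ℝ) 1,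
      a * ∑ n ∈ Finset.Icc 1 (Na α β a),
          Real.exp (-(a * Real.pi * (n : ℝ) ^ β)) * (n : ℝ) ^ (β - α) ≤
        Real.pi⁻¹ * Real.pi * (((β - α) / (Real.pi * β)) ^ (1 / β) + 1) ^ (β - α + 1) *
          a ^ ((α - 1) / β) := by
  rintro a ⟨ha0, ha1⟩
  have hπ := Real.pi_pos
  have hβ0 : (0:ℝ) < β := lt_of_lt_of_le (by linarith) hβ
  have hβα : (0:ℝ) ≤ β - α := by linarith
  set C : ℝ := ((β - α) / (Real.pi * β)) ^ (1 / β) with hCdef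
  have hC0 : 0 ≤ C := Real.rpow_nonneg (by positivity) _
  set N : ℕ := Na α β a with hNdef
  have hN1 : 1 ≤ N := Nat.le_add_left 1 _
  have hNpos : (0:ℝ) < (N:ℝ) := by exact_mod_cast hN1
  -- Step 1: bound the sum by N * N^(β-α)
  have hsum : (∑ n ∈ Finset.Icc 1 N,
      Real.exp (-(a * Real.pi * (n : ℝ) ^ β)) * (n : ℝ) ^ (β - α)) ≤
      (N:ℝ) * (N:ℝ) ^ (β - α) := by
    calc (∑ n ∈ Finset.Icc 1 N,
        Real.exp (-(a * Real.pi * (n : ℝ) ^ β)) * (n : ℝ) ^ (β - α))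
        ≤ ∑ n ∈ Finset.Icc 1 N, (N:ℝ) ^ (β - α) := by
          apply Finset.sum_le_sum
          intro n hn
          obtain ⟨hn1, hnN⟩ := Finset.mem_Icc.mp hn
          have h1 : Real.exp (-(a * Real.pi * (n : ℝ) ^ β)) ≤ 1 := by
            apply Real.exp_le_one_iff.mpr
            have h0 : (0:ℝ) ≤ (n:ℝ) ^ β := Real.rpow_nonneg (Nat.cast_nonneg n) _
            have := mul_nonneg (mul_nonneg ha0.le hπ.le) h0
            linarith
          have h2 : (n:ℝ) ^ (β - α) ≤ (N:ℝ) ^ (β - α) :=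
            Real.rpow_le_rpow (Nat.cast_nonneg n) (Nat.cast_le.mpr hnN) hβα
          calc Real.exp (-(a * Real.pi * (n : ℝ) ^ β)) * (n : ℝ) ^ (β - α)
              ≤ 1 * (N:ℝ) ^ (β - α) := by
                apply mul_le_mul h1 h2 (Real.rpow_nonneg (Nat.cast_nonneg n) _) zero_le_one
            _ = (N:ℝ) ^ (β - α) := one_mul _
      _ = (N:ℝ) * (N:ℝ) ^ (β - α) := by
          rw [Finset.sum_const, Nat.card_Icc]
          simp [nsmul_eq_mul]
  have hsum' : (∑ n ∈ Finset.Icc 1 N,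
      Real.exp (-(a * Real.pi * (n : ℝ) ^ β)) * (n : ℝ) ^ (β - α)) ≤
      (N:ℝ) ^ (β - α + 1) := by
    rw [Real.rpow_add_one hNpos.ne']
    linarith [hsum, mul_comm ((N:ℝ)) ((N:ℝ) ^ (β - α))]
  -- Step 2: N ≤ (C+1) * a^(-(1/β))
  have hainv : (1:ℝ) ≤ a ^ (-(1/β)) :=
    Real.one_le_rpow_of_pos_of_le_one_of_nonpos ha0 ha1 (neg_nonpos.mpr (by positivity))
  have hX : ((β - α) / (a * Real.pi * β)) ^ (1 / β) = C * a ^ (-(1/β)) := by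
    have h1 : (β - α) / (a * Real.pi * β) = ((β - α) / (Real.pi * β)) * a⁻¹ := by
      field_simp
    rw [h1, Real.mul_rpow (by positivity) (by positivity), hCdef,
      Real.inv_rpow ha0.le, ← Real.rpow_neg ha0.le]
  have hNle : (N:ℝ) ≤ (C + 1) * a ^ (-(1/β)) := by
    have hfloor : (⌊((β - α) / (a * Real.pi * β)) ^ (1 / β)⌋₊ : ℝ) ≤
        ((β - α) / (a * Real.pi * β)) ^ (1 / β) :=
      Nat.floor_le (Real.rpow_nonneg (by positivity) _)
    have : (N:ℝ) = (⌊((β - α) / (a * Real.pi * β)) ^ (1 / β)⌋₊ : ℝ) + 1 := by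
      simp [hNdef, Na]
    rw [this]
    have := hX ▸ hfloor
    nlinarith
  -- Step 3: combine
  have hstep : a * (N:ℝ) ^ (β - α + 1) ≤
      (C + 1) ^ (β - α + 1) * a ^ ((α - 1) / β) := by
    have hpow : (N:ℝ) ^ (β - α + 1) ≤ ((C + 1) * a ^ (-(1/β))) ^ (β - α + 1) :=
      Real.rpow_le_rpow hNpos.le hNle (by linarith)
    have hsplit : ((C + 1) * a ^ (-(1/β))) ^ (β - α + 1) =
        (C + 1) ^ (β - α + 1) * a ^ (-(1/β) * (β - α + 1)) := by
      rw [Real.mul_rpow (by linarith) (Real.rpow_nonneg ha0.le _),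
        ← Real.rpow_mul ha0.le]
    have hexp : a * a ^ (-(1/β) * (β - α + 1)) = a ^ ((α - 1) / β) := by
      nth_rewrite 1 [← Real.rpow_one a]
      rw [← Real.rpow_add ha0]
      congr 1
      field_simp
      ring
    calc a * (N:ℝ) ^ (β - α + 1) ≤ a * ((C + 1) * a ^ (-(1/β))) ^ (β - α + 1) := by
          exact mul_le_mul_of_nonneg_left hpow ha0.le
      _ = (C + 1) ^ (β - α + 1) * (a * a ^ (-(1/β) * (β - α + 1))) := by
          rw [hsplit]; ring
      _ = (C + 1) ^ (β - α + 1) * a ^ ((α - 1) / β) := by rw [hexp]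
  have hRHS : Real.pi⁻¹ * Real.pi * (C + 1) ^ (β - α + 1) * a ^ ((α - 1) / β) =
      (C + 1) ^ (β - α + 1) * a ^ ((α - 1) / β) := by
    rw [inv_mul_cancel₀ (ne_of_gt hπ), one_mul]
  rw [hCdef] at hRHS
  rw [hRHS]
  calc a * ∑ n ∈ Finset.Icc 1 (Na α β a),
        Real.exp (-(a * Real.pi * (n : ℝ) ^ β)) * (n : ℝ) ^ (β - α)
      ≤ a * (N:ℝ) ^ (β - α + 1) := mul_le_mul_of_nonneg_left hsum' ha0.le
    _ ≤ (C + 1) ^ (β - α + 1) * a ^ ((α - 1) / β) := hstep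
end
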